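/- arXiv:q-alg/9706006 — 4 statements merged into one kernel-verified Lean document; each statement's English description precedes it below -/
import Mathlib

section
/- For each 1 ≤ i ≤ n−1, the transposition operator s_i has the following adjoint with respect to the Jackson-integral pairing: for all polynomials f, g ∈ ℝ[x_1,…,x_n] (not necessarily symmetric), ⟨s_i f | g⟩ = ⟨f | ((t·x_i − x_{i+1})/(x_i − t·x_{i+1})) · s_i g⟩, where (s_i f)(x) is f with x_i and x_{i+1} interchanged. The pole of the integrand coming from the factor (x_i − t·x_{i+1}) is cancelled by a zero of Δ_q^{(k)}, so the pairing is well defined. -/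
noncomputable section
namespace ASC

/-- The infinite `q`-Pochhammer symbol `(z;q)_∞ := ∏_{j=0}^∞ (1 − z·q^j)`. -/
def qPochInf (z q : ℝ) : ℝ := ∏' j : ℕ, (1 - z * q ^ j)

/-- The weight `w_U(x) := ((qx;q)_∞·((qx/a);q)_∞)/((q;q)_∞·(a;q)_∞·((q/a);q)_∞)`. -/
def wU (q a x : ℝ) : ℝ :=
  (qPochInf (q * x) q * qPochInf (q * x / a) q) /
    (qPochInf q q * qPochInf a q * qPochInf (q / a) q)

/-- The `n`-fold Jackson integral of `G` over `[a,1]^n`. -/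
def jackson (n : ℕ) (q a : ℝ) (G : (Fin n → ℝ) → ℝ) : ℝ :=
  (1 - q) ^ n * ∑' (ε : Fin n → Bool), ∑' (m : Fin n → ℕ),
    (∏ l, (if ε l then -a else 1) * q ^ m l) *
      G (fun l => (if ε l then a else 1) * q ^ m l)

/-- `Δ_q^{(k)} := ∏_{p=−(k−1)}^{k} ∏_{1≤i<j≤n} (x_i − q^p·x_j)` as a polynomial. -/
def DeltaPoly (n k : ℕ) (q : ℝ) : MvPolynomial (Fin n) ℝ :=
  ∏ p ∈ Finset.Icc (-(k : ℤ) + 1) (k : ℤ),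
    ∏ i : Fin n, ∏ j ∈ Finset.Ioi i, (MvPolynomial.X i - MvPolynomial.C (q ^ p) * MvPolynomial.X j)


/-! The swap `x_i ↔ x_{i+1}` permutes the sample points of the Jackson integral and leaves
`∏ w_U(x_l)` invariant, so `⟨s_i f | g⟩ = ∫ f · s_i g · s_i Δ · ∏ w_U`. Under `s_i` the factors of
`Δ = Δ_q^{(k)}` belonging to pairs other than `(i, i+1)` are permuted among themselves, while
`∏_{p=1-k}^{k} (x_i - q^p x_{i+1})` turns into `q^k ∏_{p=-k}^{k-1} (x_i - q^p x_{i+1})`. Peeling off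
either end factor of `∏_{p=-k}^{k}` then gives `s_i Δ · (x_i - t x_{i+1}) = Δ · (t x_i - x_{i+1})`,
which is the claimed adjoint relation. -/

open Finset MvPolynomial

lemma prod_Icc_neg_zpow {K : Type*} [Field K] (c : K) (hc : c ≠ 0) (k : ℕ) :
    ∏ p ∈ Icc (-(k : ℤ) + 1) k, -c ^ p = c ^ k := by
  induction k with
  | zero => simp
  | succ k ih =>
    have hIcc : Icc (-((k + 1 : ℕ) : ℤ) + 1) (k + 1 : ℕ) =
        insert (-k : ℤ) (insert (k + 1 : ℤ) (Icc (-(k : ℤ) + 1) k)) := by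
      ext p; simp only [mem_Icc, mem_insert]; omega
    rw [hIcc, prod_insert (by simp; omega), prod_insert (by simp), ih, zpow_neg,
      zpow_add_one₀ hc, zpow_natCast]
    field_simp
    ring

lemma prod_Icc_sub_zpow_swap_mul {K A : Type*} [Field K] [CommRing A] [Algebra K A]
    (c : K) (hc : c ≠ 0) (k : ℕ) (x y : A) :
    (∏ p ∈ Icc (-(k : ℤ) + 1) k, (y - algebraMap K A (c ^ p) * x))
        * (x - algebraMap K A (c ^ k) * y)
      = (∏ p ∈ Icc (-(k : ℤ) + 1) k, (x - algebraMap K A (c ^ p) * y))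
          * (algebraMap K A (c ^ k) * x - y) := by
  set φ := algebraMap K A
  have hinv : ∀ p : ℤ, φ (c ^ p) * φ (c ^ (-p)) = 1 := fun p => by
    rw [← map_mul, ← zpow_add₀ hc, add_neg_cancel, zpow_zero, map_one]
  have hfactor : ∀ p : ℤ, y - φ (c ^ p) * x = φ (-c ^ p) * (x - φ (c ^ (-p)) * y) := fun p => by
    rw [map_neg]
    linear_combination (-y) * hinv p
  have hreflect : ∏ p ∈ Icc (-(k : ℤ) + 1) k, (x - φ (c ^ (-p)) * y)
      = ∏ p ∈ Icc (-k : ℤ) (k - 1), (x - φ (c ^ p) * y) :=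
    prod_nbij' (- ·) (- ·) (by intro p; simp only [mem_Icc]; omega)
      (by intro p; simp only [mem_Icc]; omega) (by simp) (by simp) (by simp)
  have hk : (-k : ℤ) ≤ k := by omega
  calc _ = φ (c ^ k) * ((x - φ (c ^ (k : ℤ)) * y)
          * ∏ p ∈ Icc (-k : ℤ) (k - 1), (x - φ (c ^ p) * y)) := by
        rw [prod_congr rfl fun p _ => hfactor p, prod_mul_distrib, ← map_prod,
          prod_Icc_neg_zpow c hc, hreflect, zpow_natCast]
        ring
    _ = φ (c ^ k) * ∏ p ∈ Icc (-k : ℤ) k, (x - φ (c ^ p) * y) := by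
        rw [← insert_Icc_sub_one_right_eq_Icc hk, prod_insert (by simp)]
    _ = φ (c ^ k) * ((x - φ (c ^ (-k : ℤ)) * y)
          * ∏ p ∈ Icc (-(k : ℤ) + 1) k, (x - φ (c ^ p) * y)) := by
        rw [← insert_Icc_add_one_left_eq_Icc hk, prod_insert (by simp)]
    _ = _ := by
        rw [← zpow_natCast]
        linear_combination (-(∏ p ∈ Icc (-(k : ℤ) + 1) k, (x - φ (c ^ p) * y)) * y) * hinv k

section Pairs

abbrev ltPairs (n : ℕ) : Finset (Fin n × Fin n) := {x | x.1 < x.2}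

variable {n : ℕ} {M : Type*} [CommMonoid M]

lemma prod_Ioi_eq_mul_prod_erase (F : Fin n → Fin n → M) {i₀ i₁ : Fin n} (h : i₀ < i₁) :
    ∏ i, ∏ j ∈ Ioi i, F i j = F i₀ i₁ * ∏ x ∈ (ltPairs n).erase (i₀, i₁), F x.1 x.2 := by
  rw [← prod_finset_product' (ltPairs n) univ Ioi (by simp),
    ← mul_prod_erase _ (fun x => F x.1 x.2) (show (i₀, i₁) ∈ _ by simpa)]

/-- Adjacency is what makes the swap preserve `i < j` on every pair other than `(i₀, i₁)`. -/
lemma prod_erase_comp_swap (F : Fin n → Fin n → M) {i₀ i₁ : Fin n} (hadj : (i₀ : ℕ) + 1 = i₁) :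
    ∏ x ∈ (ltPairs n).erase (i₀, i₁), F (Equiv.swap i₀ i₁ x.1) (Equiv.swap i₀ i₁ x.2)
      = ∏ x ∈ (ltPairs n).erase (i₀, i₁), F x.1 x.2 := by
  have hmaps : ∀ a b : Fin n, (a, b) ∈ (ltPairs n).erase (i₀, i₁) →
      (Equiv.swap i₀ i₁ a, Equiv.swap i₀ i₁ b) ∈ (ltPairs n).erase (i₀, i₁) := by
    intro a b
    simp only [mem_erase, mem_filter, mem_univ, true_and, ne_eq, Prod.mk.injEq,
      Equiv.swap_apply_def, Fin.ext_iff, Fin.lt_def]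
    split_ifs <;> omega
  refine prod_equiv ((Equiv.swap i₀ i₁).prodCongr (Equiv.swap i₀ i₁)) (fun x => ?_)
    (fun _ _ => rfl)
  exact ⟨hmaps x.1 x.2, fun h => by simpa using hmaps _ _ h⟩

end Pairs

section DeltaPoly

variable {n : ℕ} (k : ℕ) {q : ℝ} {i₀ i₁ : Fin n}

lemma DeltaPoly_eq_prod_mul_prod_erase (h : i₀ < i₁) :
    DeltaPoly n k q = ∏ p ∈ Icc (-(k : ℤ) + 1) k, ((X i₀ - C (q ^ p) * X i₁) *
      ∏ x ∈ (ltPairs n).erase (i₀, i₁),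
        (X x.1 - C (q ^ p) * X x.2)) :=
  prod_congr rfl fun p _ => prod_Ioi_eq_mul_prod_erase (fun i j => X i - C (q ^ p) * X j) h

lemma rename_swap_DeltaPoly (hadj : (i₀ : ℕ) + 1 = i₁) :
    rename (Equiv.swap i₀ i₁) (DeltaPoly n k q) = ∏ p ∈ Icc (-(k : ℤ) + 1) k,
      ((X i₁ - C (q ^ p) * X i₀) *
        ∏ x ∈ (ltPairs n).erase (i₀, i₁),
          (X x.1 - C (q ^ p) * X x.2)) := by
  have h : i₀ < i₁ := by rw [Fin.lt_def]; omega
  simp only [DeltaPoly, map_prod, map_sub, map_mul, rename_X, rename_C]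
  refine prod_congr rfl fun p _ => ?_
  rw [prod_Ioi_eq_mul_prod_erase _ h, Equiv.swap_apply_left, Equiv.swap_apply_right,
    prod_erase_comp_swap (fun i j => X i - C (q ^ p) * X j) hadj]

lemma rename_swap_DeltaPoly_mul (hq : q ≠ 0) (hadj : (i₀ : ℕ) + 1 = i₁) :
    rename (Equiv.swap i₀ i₁) (DeltaPoly n k q) * (X i₀ - C (q ^ k) * X i₁)
      = DeltaPoly n k q * (C (q ^ k) * X i₀ - X i₁) := by
  have h : i₀ < i₁ := by rw [Fin.lt_def]; omega
  have hpair := prod_Icc_sub_zpow_swap_mul (A := MvPolynomial (Fin n) ℝ) q hq k (X i₀) (X i₁)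
  simp only [MvPolynomial.algebraMap_eq] at hpair
  rw [rename_swap_DeltaPoly k hadj, DeltaPoly_eq_prod_mul_prod_erase k h, prod_mul_distrib,
    prod_mul_distrib]
  linear_combination (∏ p ∈ Icc (-(k : ℤ) + 1) k,
    ∏ x ∈ (ltPairs n).erase (i₀, i₁),
      (X x.1 - C (q ^ p) * X x.2)) * hpair

end DeltaPoly

lemma jackson_comp_perm (n : ℕ) (q a : ℝ) (σ : Equiv.Perm (Fin n)) (G : (Fin n → ℝ) → ℝ) :
    jackson n q a (fun x => G (x ∘ σ)) = jackson n q a G := by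
  unfold jackson
  congr 1
  conv_rhs => rw [← (σ.symm.arrowCongr (Equiv.refl Bool)).tsum_eq]
  refine tsum_congr fun ε => ?_
  conv_rhs => rw [← (σ.symm.arrowCongr (Equiv.refl ℕ)).tsum_eq]
  refine tsum_congr fun m => ?_
  simp only [Equiv.arrowCongr_apply, Equiv.coe_refl, Equiv.symm_symm, Function.comp_apply,
    id_eq]
  rw [Equiv.prod_comp σ (fun l => (if ε l then -a else 1) * q ^ m l)]
  rfl

theorem statement7_general (n k : ℕ) (q a : ℝ) (hq0 : 0 < q) (i : ℕ) (hi : i + 1 < n)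
    (f g : MvPolynomial (Fin n) ℝ) :
    ∃ P : MvPolynomial (Fin n) ℝ,
      P * (MvPolynomial.X (⟨i, Nat.lt_of_succ_lt hi⟩ : Fin n)
            - MvPolynomial.C (q ^ k) * MvPolynomial.X (⟨i + 1, hi⟩ : Fin n))
        = f * (MvPolynomial.C (q ^ k) * MvPolynomial.X (⟨i, Nat.lt_of_succ_lt hi⟩ : Fin n)
            - MvPolynomial.X (⟨i + 1, hi⟩ : Fin n))
            * MvPolynomial.rename (Equiv.swap (⟨i, Nat.lt_of_succ_lt hi⟩ : Fin n) ⟨i + 1, hi⟩) g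
            * DeltaPoly n k q ∧
      jackson n q a (fun x =>
          MvPolynomial.eval x
            (MvPolynomial.rename (Equiv.swap (⟨i, Nat.lt_of_succ_lt hi⟩ : Fin n) ⟨i + 1, hi⟩) f
              * g * DeltaPoly n k q) * ∏ l, wU q a (x l))
        = jackson n q a (fun x => MvPolynomial.eval x P * ∏ l, wU q a (x l)) := by
  set σ := Equiv.swap (⟨i, Nat.lt_of_succ_lt hi⟩ : Fin n) ⟨i + 1, hi⟩
  refine ⟨f * rename σ g * rename σ (DeltaPoly n k q), ?_, ?_⟩
  · linear_combination (f * rename σ g) * rename_swap_DeltaPoly_mul k hq0.ne'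
      (i₀ := ⟨i, Nat.lt_of_succ_lt hi⟩) (i₁ := ⟨i + 1, hi⟩) rfl
  · rw [← jackson_comp_perm n q a σ]
    congr 1
    funext x
    have hσσ : x ∘ σ ∘ σ = x := funext fun l => congrArg x (Equiv.swap_apply_self _ _ l)
    simp only [map_mul, eval_rename, Function.comp_assoc, hσσ]
    rw [← Equiv.prod_comp σ (fun l => wU q a (x l))]
    rfl

/-- STATEMENT 7: the adjoint of the transposition `s_i` with respect to the
Jackson-integral pairing: `⟨s_i f|g⟩ = ⟨f|((t·x_i − x_{i+1})/(x_i − t·x_{i+1}))·s_i g⟩`,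
with `t = q^k`. The rational function `f·((t·x_i − x_{i+1})/(x_i − t·x_{i+1}))·(s_i g)·Δ_q^{(k)}`
is in fact a polynomial `P` (the pole from `(x_i − t·x_{i+1})` is cancelled by a zero of
`Δ_q^{(k)}`), and the pairing identity is stated via `P`. -/
theorem statement7 (n k : ℕ) (hn : 1 ≤ n) (hk : 1 ≤ k) (q a : ℝ)
    (hq0 : 0 < q) (hq1 : q < 1) (ha : a < 0)
    (i : ℕ) (hi : i + 1 < n)
    (f g : MvPolynomial (Fin n) ℝ) :
    ∃ P : MvPolynomial (Fin n) ℝ,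
      P * (MvPolynomial.X (⟨i, Nat.lt_of_succ_lt hi⟩ : Fin n)
            - MvPolynomial.C (q ^ k) * MvPolynomial.X (⟨i + 1, hi⟩ : Fin n))
        = f * (MvPolynomial.C (q ^ k) * MvPolynomial.X (⟨i, Nat.lt_of_succ_lt hi⟩ : Fin n)
            - MvPolynomial.X (⟨i + 1, hi⟩ : Fin n))
            * MvPolynomial.rename (Equiv.swap (⟨i, Nat.lt_of_succ_lt hi⟩ : Fin n) ⟨i + 1, hi⟩) g
            * DeltaPoly n k q ∧
      jackson n q a (fun x =>
          MvPolynomial.eval x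
            (MvPolynomial.rename (Equiv.swap (⟨i, Nat.lt_of_succ_lt hi⟩ : Fin n) ⟨i + 1, hi⟩) f
              * g * DeltaPoly n k q) * ∏ l, wU q a (x l))
        = jackson n q a (fun x => MvPolynomial.eval x P * ∏ l, wU q a (x l)) :=
  statement7_general n k q a hq0 i hi f g

end ASC
end
end

section
/- Let R be a commutative ring and t, a ∈ R. Then for every integer m ≥ 0, Σ_{i=0}^{m} f̃_{m−i} · [m choose i]_t · (−a)^i = t^{m(m−1)/2}. -/
noncomputable section
namespace ASC

/-- Gaussian binomial coefficient `[m choose i]_t`, defined by `[m choose 0]_t = 1`,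
`[m choose i]_t = 0` for `i > m`, and the Pascal rule
`[m choose i]_t = [m−1 choose i]_t + t^{m−i}·[m−1 choose i−1]_t`. -/
def gbinom {R : Type*} [CommRing R] (t : R) : ℕ → ℕ → R
  | _, 0 => 1
  | 0, _ + 1 => 0
  | m + 1, i + 1 => gbinom t m (i + 1) + t ^ (m - i) * gbinom t m i

/-- The sequence `f_i`: `f_0 = 1`, `f_1 = −(1+a)`,
`f_i = −(1+a)·f_{i−1} + a·(t^{i−1}−1)·f_{i−2}`. -/
def fseq {R : Type*} [CommRing R] (a t : R) : ℕ → R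
  | 0 => 1
  | 1 => -(1 + a)
  | i + 2 => -(1 + a) * fseq a t (i + 1) + a * (t ^ (i + 1) - 1) * fseq a t i

/-- The sequence `f̃_i`: `f̃_0 = 1`, `f̃_1 = 1+a`,
`f̃_i = (1+a)·t^{i−1}·f̃_{i−1} + a·t^{i−2}·(1−t^{i−1})·f̃_{i−2}`. -/
def ftseq {R : Type*} [CommRing R] (a t : R) : ℕ → R
  | 0 => 1
  | 1 => 1 + a
  | i + 2 => (1 + a) * t ^ (i + 1) * ftseq a t (i + 1) + a * t ^ i * (1 - t ^ (i + 1)) * ftseq a t i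

/-- The multivariable Al-Salam–Carlitz polynomial
`W_p = U^{(a)}_{(1^p)} = ∑_{i=0}^p f_i·[n−p+i choose i]_t·e_{p−i}`. -/
def Wpoly {R : Type*} [CommRing R] (n : ℕ) (t a : R) (p : ℕ) : MvPolynomial (Fin n) R :=
  ∑ i ∈ Finset.range (p + 1),
    MvPolynomial.C (fseq a t i * gbinom t (n - p + i) i) * MvPolynomial.esymm (Fin n) R (p - i)

/-!
Induction on `m`. Pascal's rule turns the sum for `m + 1` into a sum against `[m choose i]_t`;
after feeding in the recurrence of `f̃`, the correction terms cancel against each other under a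
shift of index, by the `q`-symmetry `(1 - t^(j+1)) [m choose j+1]_t = (1 - t^(m-j)) [m choose j]_t`.
What is left is `t ^ m` times the sum for `m`, and `m(m-1)/2 + m = (m+1)m/2`.
-/

open Finset

section

variable {R : Type*} [CommRing R]

@[simp]
lemma gbinom_zero_right (t : R) (m : ℕ) : gbinom t m 0 = 1 := by
  cases m <;> rfl

lemma gbinom_succ_succ (t : R) (m i : ℕ) :
    gbinom t (m + 1) (i + 1) = gbinom t m (i + 1) + t ^ (m - i) * gbinom t m i := rfl

lemma gbinom_eq_zero_of_lt (t : R) {m i : ℕ} (h : m < i) : gbinom t m i = 0 := by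
  induction m generalizing i with
  | zero => obtain ⟨i, rfl⟩ := Nat.exists_eq_succ_of_ne_zero (by omega : i ≠ 0); rfl
  | succ m ih =>
    obtain ⟨i, rfl⟩ := Nat.exists_eq_succ_of_ne_zero (by omega : i ≠ 0)
    rw [gbinom_succ_succ, ih (by omega), ih (by omega), mul_zero, add_zero]

/-- The `q`-analogue of `(j + 1) * C(m, j + 1) = (m - j) * C(m, j)`. -/
lemma one_sub_pow_mul_gbinom_succ (t : R) (m j : ℕ) :
    (1 - t ^ (j + 1)) * gbinom t m (j + 1) = (1 - t ^ (m - j)) * gbinom t m j := by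
  induction m generalizing j with
  | zero =>
    cases j <;> simp [gbinom_eq_zero_of_lt]
  | succ m ih =>
    cases j with
    | zero =>
      have h := ih 0
      simp only [gbinom_zero_right, Nat.sub_zero] at h ⊢
      rw [gbinom_succ_succ, gbinom_zero_right, Nat.sub_zero]
      linear_combination h
    | succ k =>
      rcases lt_or_ge m (k + 1) with hmk | hkm
      · rw [gbinom_eq_zero_of_lt t (by omega : m + 1 < k + 1 + 1)]
        rcases (by omega : m = k ∨ m < k) with rfl | hlt
        · simp
        · rw [gbinom_eq_zero_of_lt t (by omega : m + 1 < k + 1), mul_zero, mul_zero]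
      · obtain ⟨d, rfl⟩ := Nat.exists_eq_add_of_le hkm
        have ih₁ := ih (k + 1)
        have ih₀ := ih k
        rw [show k + 1 + d - (k + 1) = d by omega] at ih₁
        rw [show k + 1 + d - k = d + 1 by omega] at ih₀
        rw [gbinom_succ_succ, gbinom_succ_succ, show k + 1 + d - (k + 1) = d by omega,
          show k + 1 + d - k = d + 1 by omega, show k + 1 + d + 1 - (k + 1) = d + 1 by omega]
        linear_combination ih₁ + t ^ (d + 1) * ih₀

lemma sum_range_succ_gbinom_succ (t x : R) (F : ℕ → R) (m : ℕ) :
    ∑ i ∈ range (m + 2), F (m + 1 - i) * gbinom t (m + 1) i * x ^ i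
      = ∑ i ∈ range (m + 1),
          (F (m + 1 - i) + x * t ^ (m - i) * F (m - i)) * gbinom t m i * x ^ i := by
  have hlast : ∑ i ∈ range (m + 1), F (m + 1 - i) * gbinom t m i * x ^ i
      = ∑ i ∈ range (m + 2), F (m + 1 - i) * gbinom t m i * x ^ i := by
    rw [sum_range_succ _ (m + 1), gbinom_eq_zero_of_lt t (Nat.lt_succ_self m)]
    simp
  simp only [add_mul, sum_add_distrib, hlast]
  rw [sum_range_succ', sum_range_succ' _ (m + 1)]
  simp only [gbinom_succ_succ, gbinom_zero_right, Nat.add_sub_add_right, mul_add, add_mul,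
    sum_add_distrib]
  rw [add_right_comm]
  congr 2 with i
  ring

/-- Shift the summation index by one: the boundary terms vanish because of the factors
`t ^ 0 - 1` and `1 - t ^ 0`. -/
lemma sum_range_pow_sub_one_mul_gbinom (t x : R) (F : ℕ → R) (m : ℕ) :
    ∑ i ∈ range (m + 1), t ^ (m - i) * (t ^ i - 1) * F (m - i) * gbinom t m i * x ^ i
      = ∑ i ∈ range (m + 1),
          -x * t ^ (m - i - 1) * (1 - t ^ (m - i)) * F (m - i - 1) * gbinom t m i * x ^ i := by
  rw [sum_range_succ', sum_range_succ]
  simp only [pow_zero, sub_self, mul_zero, zero_mul, Nat.sub_self, add_zero]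
  refine sum_congr rfl fun j _ => ?_
  rw [show m - (j + 1) = m - j - 1 by omega]
  linear_combination (-(t ^ (m - j - 1) * F (m - j - 1) * x ^ (j + 1)))
    * one_sub_pow_mul_gbinom_succ t m j

lemma ftseq_succ (a t : R) (k : ℕ) :
    ftseq a t (k + 1)
      = (1 + a) * t ^ k * ftseq a t k + a * t ^ (k - 1) * (1 - t ^ k) * ftseq a t (k - 1) := by
  cases k with
  | zero => simp [ftseq]
  | succ k => rfl

lemma sum_ftseq_gbinom_succ (t a : R) (m : ℕ) :
    ∑ i ∈ range (m + 2), ftseq a t (m + 1 - i) * gbinom t (m + 1) i * (-a) ^ i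
      = t ^ m * ∑ i ∈ range (m + 1), ftseq a t (m - i) * gbinom t m i * (-a) ^ i := by
  calc _ = ∑ i ∈ range (m + 1), (ftseq a t (m + 1 - i) + -a * t ^ (m - i) * ftseq a t (m - i))
          * gbinom t m i * (-a) ^ i := sum_range_succ_gbinom_succ t (-a) (ftseq a t) m
    _ = ∑ i ∈ range (m + 1), (t ^ (m - i) * ftseq a t (m - i)
          + a * t ^ (m - i - 1) * (1 - t ^ (m - i)) * ftseq a t (m - i - 1))
          * gbinom t m i * (-a) ^ i := by
        refine sum_congr rfl fun i hi => ?_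
        rw [show m + 1 - i = m - i + 1 by grind, ftseq_succ]
        ring
    _ = ∑ i ∈ range (m + 1), (t ^ (m - i) * ftseq a t (m - i)
          + t ^ (m - i) * (t ^ i - 1) * ftseq a t (m - i)) * gbinom t m i * (-a) ^ i := by
        simp only [add_mul, sum_add_distrib, sum_range_pow_sub_one_mul_gbinom, neg_neg]
    _ = _ := by
        rw [mul_sum]
        refine sum_congr rfl fun i hi => ?_
        rw [← pow_sub_mul_pow t (Nat.lt_succ_iff.mp (mem_range.mp hi))]
        ring

end

/-- STATEMENT 12: `∑_{i=0}^m f̃_{m−i}·[m choose i]_t·(−a)^i = t^{m(m−1)/2}`. -/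
theorem statement12 {R : Type*} [CommRing R] (t a : R) (m : ℕ) :
    ∑ i ∈ Finset.range (m + 1), ftseq a t (m - i) * gbinom t m i * (-a) ^ i
      = t ^ (m * (m - 1) / 2) := by
  induction m with
  | zero => simp [ftseq]
  | succ m ih => rw [sum_ftseq_gbinom_succ, ih, ← pow_add, Nat.triangle_succ, add_comm]

end ASC
end
end

section
/- q-difference (eigenvalue) equation for the one-variable Al-Salam–Carlitz polynomials: for every nonnegative integer n, every nonzero real q, every real a, and all real x ≠ 0, g(x) − (1+a)·(D g)(x) + a·(D(D g))(x) = q^{−n} · U_n^{(a)}(x;q), where g(x) := U_n^{(a)}(x/q; q) and (D h)(x) := (h(x) − h(q·x))/x. (Equivalently, (1 − (1+a)·D + a·D²)·τ^{−1} U_n^{(a)} = q^{−n}·U_n^{(a)} with (τ^{−1}h)(x) := h(x/q).) -/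
/-!
The operator `D` lowers the degree: `D U_{n+1} = (1 - q^{n+1}) U_n`, which follows from the
three-term recurrence by induction. Hence the left-hand side is a combination of `U_n`, `U_{n-1}`
and `U_{n-2}` evaluated at `x/q`. Eliminating `x·U_{n+1}(x)` between the lowering identity and
the recurrence expresses `U_n(q y)` as `q^n` times exactly that combination at `y = x/q`.
-/

noncomputable section
namespace ASC

/-- The one-variable Al-Salam–Carlitz polynomials `U_n^{(a)}(x;q)`: `U_0 = 1`,
`U_1 = x − 1 − a`, and
`x·U_n = U_{n+1} + (1+a)·q^n·U_n − a·q^{n−1}·(1−q^n)·U_{n−1}` for `n ≥ 1`. -/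
def U1 (a q : ℝ) : ℕ → ℝ → ℝ
  | 0, _ => 1
  | 1, x => x - 1 - a
  | n + 2, x =>
      x * U1 a q (n + 1) x - (1 + a) * q ^ (n + 1) * U1 a q (n + 1) x
        + a * q ^ n * (1 - q ^ (n + 1)) * U1 a q n x

/-- The divided-difference operator `(D h)(x) := (h(x) − h(q·x))/x`. -/
def Dop (q : ℝ) (h : ℝ → ℝ) (x : ℝ) : ℝ := (h x - h (q * x)) / x

theorem U1_succ_sub_U1_succ_mul (a q : ℝ) :
    ∀ (n : ℕ) (x : ℝ),
      U1 a q (n + 1) x - U1 a q (n + 1) (q * x) = (1 - q ^ (n + 1)) * x * U1 a q n x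
  | 0, x => by simp only [U1]; ring
  | 1, x => by simp only [U1]; ring
  | n + 2, x => by
      have ih₁ := U1_succ_sub_U1_succ_mul a q (n + 1) x
      have ih₀ := U1_succ_sub_U1_succ_mul a q n x
      simp only [U1.eq_3] at ih₁ ⊢
      linear_combination (q * x - (1 + a) * q ^ (n + 2)) * ih₁
        + a * q ^ (n + 1) * (1 - q ^ (n + 2)) * ih₀

-- For small `n` the indices `n - 1`, `n - 2` truncate, harmlessly: their coefficients contain
-- the factor `1 - q ^ 0 = 0`.
theorem U1_mul_eq {q : ℝ} (hq : q ≠ 0) (a : ℝ) (n : ℕ) (y : ℝ) :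
    U1 a q n (q * y) = q ^ n * (U1 a q n y - (1 + a) * (1 - q ^ n) / q * U1 a q (n - 1) y
      + a * (1 - q ^ n) * (1 - q ^ (n - 1)) / q ^ 2 * U1 a q (n - 2) y) := by
  match n with
  | 0 => simp [U1]
  | 1 => simp only [U1, Nat.sub_self, pow_zero, pow_one]; field_simp; ring
  | m + 2 =>
      have hlower := U1_succ_sub_U1_succ_mul a q (m + 1) y
      have hrec := U1.eq_3 a q y m
      simp only [Nat.add_sub_cancel, Nat.add_one_sub_one]
      field_simp
      linear_combination (-q ^ 2) * hlower + q ^ 2 * (1 - q ^ (m + 2)) * hrec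

theorem Dop_congr {q : ℝ} (hq : q ≠ 0) {h h' : ℝ → ℝ} (hhh' : ∀ y ≠ 0, h y = h' y) {x : ℝ}
    (hx : x ≠ 0) : Dop q h x = Dop q h' x := by
  rw [Dop, Dop, hhh' x hx, hhh' (q * x) (mul_ne_zero hq hx)]

theorem Dop_const_mul (q c : ℝ) (h : ℝ → ℝ) (x : ℝ) :
    Dop q (fun y => c * h y) x = c * Dop q h x := by
  simp only [Dop]; ring

theorem Dop_U1_comp_div {q : ℝ} (hq : q ≠ 0) (a : ℝ) (n : ℕ) {x : ℝ} (hx : x ≠ 0) :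
    Dop q (fun y => U1 a q n (y / q)) x = (1 - q ^ n) / q * U1 a q (n - 1) (x / q) := by
  cases n with
  | zero => simp [Dop, U1]
  | succ n =>
      have hlower := U1_succ_sub_U1_succ_mul a q n (x / q)
      rw [mul_div_cancel₀ x hq] at hlower
      rw [Dop, mul_div_cancel_left₀ x hq, hlower, Nat.add_one_sub_one]
      field_simp

theorem Dop_Dop_U1_comp_div {q : ℝ} (hq : q ≠ 0) (a : ℝ) (n : ℕ) {x : ℝ} (hx : x ≠ 0) :
    Dop q (Dop q (fun y => U1 a q n (y / q))) x
      = (1 - q ^ n) * (1 - q ^ (n - 1)) / q ^ 2 * U1 a q (n - 2) (x / q) := by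
  rw [Dop_congr hq (fun y hy => Dop_U1_comp_div hq a n hy) hx, Dop_const_mul,
    Dop_U1_comp_div hq a (n - 1) hx, Nat.sub_sub]
  ring

/-- STATEMENT 17: the `q`-difference (eigenvalue) equation for the one-variable
Al-Salam–Carlitz polynomials: with `g(x) := U_n^{(a)}(x/q;q)`,
`g(x) − (1+a)·(Dg)(x) + a·(D(Dg))(x) = q^{−n}·U_n^{(a)}(x;q)` for `x ≠ 0`. -/
theorem statement17 (n : ℕ) (q a : ℝ) (hq : q ≠ 0) (x : ℝ) (hx : x ≠ 0) :
    (fun y => U1 a q n (y / q)) x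
        - (1 + a) * Dop q (fun y => U1 a q n (y / q)) x
        + a * Dop q (Dop q (fun y => U1 a q n (y / q))) x
      = q ^ (-(n : ℤ)) * U1 a q n x := by
  rw [Dop_U1_comp_div hq a n hx, Dop_Dop_U1_comp_div hq a n hx]
  conv_rhs => rw [← mul_div_cancel₀ x hq, U1_mul_eq hq, zpow_neg, zpow_natCast,
    inv_mul_cancel_left₀ (pow_ne_zero n hq)]
  ring

end ASC
end
end

section
/- Hermite limit of the discrete q-Hermite polynomials: for every nonnegative integer n and every real x, lim_{q→1⁻} (1−q)^{−n/2} · U_n^{(−1)}( x·(1−q)^{1/2}; q ) = He_n(x), where He_n denotes the probabilists' Hermite polynomial (equivalently, the limit equals 2^{−n/2}·H_n(x/√2) with H_n the physicists' Hermite polynomial). -/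
noncomputable section
namespace ASC

/-- The probabilists' Hermite polynomials: `He_0 = 1`, `He_1 = x`,
`He_{n+1}(x) = x·He_n(x) − n·He_{n−1}(x)`. -/
def He : ℕ → ℝ → ℝ
  | 0, _ => 1
  | 1, x => x
  | n + 2, x => x * He (n + 1) x - (n + 1) * He n x

lemma key (n : ℕ) (x q : ℝ) (hq : q < 1) :
    (1 - q) ^ (-(((n : ℝ) + 2)) / 2) * U1 (-1) q (n + 2) (x * Real.sqrt (1 - q))
      = x * ((1 - q) ^ (-(((n : ℝ) + 1)) / 2) * U1 (-1) q (n + 1) (x * Real.sqrt (1 - q)))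
        - q ^ n * (∑ k ∈ Finset.range (n + 1), q ^ k) *
            ((1 - q) ^ (-(n : ℝ) / 2) * U1 (-1) q n (x * Real.sqrt (1 - q))) := by
  have h0 : (0 : ℝ) < 1 - q := by linarith
  have hs : Real.sqrt (1 - q) = (1 - q) ^ (1 / 2 : ℝ) := Real.sqrt_eq_rpow _
  have hg : 1 - q ^ (n + 1) = (1 - q) * ∑ k ∈ Finset.range (n + 1), q ^ k := by
    have h := geom_sum_mul q (n + 1)
    linear_combination h
  have e1 : (1 - q) ^ (-(((n : ℝ) + 2)) / 2) * (1 - q) ^ (1 / 2 : ℝ)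
      = (1 - q) ^ (-(((n : ℝ) + 1)) / 2) := by
    rw [← Real.rpow_add h0]; ring_nf
  have e2 : (1 - q) ^ (-(((n : ℝ) + 2)) / 2) * (1 - q)
      = (1 - q) ^ (-(n : ℝ) / 2) := by
    nth_rewrite 2 [← Real.rpow_one (1 - q)]
    rw [← Real.rpow_add h0]; ring_nf
  show (1 - q) ^ (-(((n : ℝ) + 2)) / 2) *
      (x * Real.sqrt (1 - q) * U1 (-1) q (n + 1) (x * Real.sqrt (1 - q))
        - (1 + (-1)) * q ^ (n + 1) * U1 (-1) q (n + 1) (x * Real.sqrt (1 - q))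
        + (-1) * q ^ n * (1 - q ^ (n + 1)) * U1 (-1) q n (x * Real.sqrt (1 - q))) = _
  rw [hg, hs]
  set A := U1 (-1) q (n + 1) (x * (1 - q) ^ (1 / 2 : ℝ))
  set B := U1 (-1) q n (x * (1 - q) ^ (1 / 2 : ℝ))
  calc (1 - q) ^ (-(((n : ℝ) + 2)) / 2) *
      (x * (1 - q) ^ (1 / 2 : ℝ) * A - (1 + (-1)) * q ^ (n + 1) * A
        + (-1) * q ^ n * ((1 - q) * ∑ k ∈ Finset.range (n + 1), q ^ k) * B)
      = x * (((1 - q) ^ (-(((n : ℝ) + 2)) / 2) * (1 - q) ^ (1 / 2 : ℝ)) * A)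
        - q ^ n * (∑ k ∈ Finset.range (n + 1), q ^ k) *
            (((1 - q) ^ (-(((n : ℝ) + 2)) / 2) * (1 - q)) * B) := by ring
    _ = _ := by rw [e1, e2]

/-- STATEMENT 18: the Hermite limit of the discrete `q`-Hermite polynomials:
`lim_{q→1⁻} (1−q)^{−n/2}·U_n^{(−1)}(x·(1−q)^{1/2};q) = He_n(x)`. -/
theorem statement18 (n : ℕ) (x : ℝ) :
    Filter.Tendsto
      (fun q : ℝ => (1 - q) ^ (-(n : ℝ) / 2) * U1 (-1) q n (x * Real.sqrt (1 - q)))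
      (nhdsWithin 1 (Set.Iio 1)) (nhds (He n x)) := by
  induction n using Nat.twoStepInduction with
  | zero =>
    apply Filter.Tendsto.congr (f₁ := fun _ : ℝ => (1 : ℝ))
    · intro q; simp [U1]
    · simpa [He] using tendsto_const_nhds
  | one =>
    have hev : ∀ᶠ q in nhdsWithin (1 : ℝ) (Set.Iio 1),
        (1 - q) ^ (-((1 : ℕ) : ℝ) / 2) * U1 (-1) q 1 (x * Real.sqrt (1 - q)) = x := by
      filter_upwards [self_mem_nhdsWithin] with q hq
      have h0 : (0 : ℝ) < 1 - q := by simp at hq; linarith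
      have hs : Real.sqrt (1 - q) = (1 - q) ^ (1 / 2 : ℝ) := Real.sqrt_eq_rpow _
      have : (1 - q) ^ (-((1 : ℕ) : ℝ) / 2) * (1 - q) ^ (1 / 2 : ℝ) = 1 := by
        rw [← Real.rpow_add h0]; norm_num
      show (1 - q) ^ (-((1 : ℕ) : ℝ) / 2) * (x * Real.sqrt (1 - q) - 1 - (-1)) = x
      rw [hs]
      calc (1 - q) ^ (-((1 : ℕ) : ℝ) / 2) * (x * (1 - q) ^ (1 / 2 : ℝ) - 1 - (-1))
          = x * ((1 - q) ^ (-((1 : ℕ) : ℝ) / 2) * (1 - q) ^ (1 / 2 : ℝ)) := by ring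
        _ = x := by rw [this]; ring
    have hHe : He 1 x = x := rfl
    rw [hHe]
    exact Filter.Tendsto.congr' (hev.mono fun q h => h.symm) tendsto_const_nhds
  | more n ihn ihn1 =>
    have hev : ∀ᶠ q in nhdsWithin (1 : ℝ) (Set.Iio 1),
        x * ((1 - q) ^ (-(((n : ℝ) + 1)) / 2) * U1 (-1) q (n + 1) (x * Real.sqrt (1 - q)))
          - q ^ n * (∑ k ∈ Finset.range (n + 1), q ^ k) *
              ((1 - q) ^ (-(n : ℝ) / 2) * U1 (-1) q n (x * Real.sqrt (1 - q)))
        = (1 - q) ^ (-((n : ℝ) + 2) / 2) * U1 (-1) q (n + 2) (x * Real.sqrt (1 - q)) := by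
      filter_upwards [self_mem_nhdsWithin] with q hq
      exact (key n x q hq).symm
    have hcoef : Filter.Tendsto (fun q : ℝ => q ^ n * ∑ k ∈ Finset.range (n + 1), q ^ k)
        (nhdsWithin 1 (Set.Iio 1)) (nhds ((n : ℝ) + 1)) := by
      have hc : Continuous (fun q : ℝ => q ^ n * ∑ k ∈ Finset.range (n + 1), q ^ k) := by
        continuity
      have := (hc.tendsto 1).mono_left (nhdsWithin_le_nhds (s := Set.Iio (1 : ℝ)))
      simpa using this
    have hlim : Filter.Tendsto
        (fun q : ℝ =>
          x * ((1 - q) ^ (-(((n : ℝ) + 1)) / 2) * U1 (-1) q (n + 1) (x * Real.sqrt (1 - q)))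
            - q ^ n * (∑ k ∈ Finset.range (n + 1), q ^ k) *
                ((1 - q) ^ (-(n : ℝ) / 2) * U1 (-1) q n (x * Real.sqrt (1 - q))))
        (nhdsWithin 1 (Set.Iio 1))
        (nhds (x * He (n + 1) x - ((n : ℝ) + 1) * He n x)) := by
      have h1 : Filter.Tendsto
          (fun q : ℝ => (1 - q) ^ (-(((n : ℝ) + 1)) / 2) * U1 (-1) q (n + 1) (x * Real.sqrt (1 - q)))
          (nhdsWithin 1 (Set.Iio 1)) (nhds (He (n + 1) x)) := by
        have := ihn1
        simpa [Nat.cast_add, Nat.cast_one, neg_add] using this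
      exact ((tendsto_const_nhds.mul h1).sub (hcoef.mul ihn))
    have := hlim.congr' hev
    have hfin : (He (n + 2) x) = x * He (n + 1) x - ((n : ℝ) + 1) * He n x := by
      simp [He]
    rw [hfin]
    convert this using 2 with q
    push_cast
    ring_nf

end ASC
end
end
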